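/- Let m ≥ 1, let a, b be real numbers, and let A be an m×m complex matrix that is symmetric (Aᵀ = A) and all of whose entries belong to the two-element set {a+bi, a−bi}. Then every eigenvalue λ of A satisfies min(m·a, 0) ≤ Re(λ) ≤ max(m·a, 0) and |Im(λ)| ≤ m·|b|. -/

import Mathlib

/-!
If `A v = λ v` with `v ≠ 0`, then `v* A v = λ ‖v‖²`. Since `A` is symmetric, its entrywise real
and imaginary parts `R` and `S` are real symmetric, hence Hermitian, so `v* R v` and `v* S v` are
real and equal `Re λ ‖v‖²` and `Im λ ‖v‖²`. Here `R = a J` with `J` the all-ones matrix, and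
`v* J v = |∑ vᵢ|² ∈ [0, m ‖v‖²]`; the entries of `S` are `±b`, so
`|v* S v| ≤ |b| (∑ |vᵢ|)² ≤ m |b| ‖v‖²` by Cauchy–Schwarz.
-/

open Complex Matrix

variable {n : Type*} [Fintype n]

lemma norm_sum_sq_le_card_mul_sum_norm_sq {E : Type*} [SeminormedAddCommGroup E] (v : n → E) :
    ‖∑ i, v i‖ ^ 2 ≤ Fintype.card n * ∑ i, ‖v i‖ ^ 2 :=
  calc ‖∑ i, v i‖ ^ 2 ≤ (∑ i, ‖v i‖) ^ 2 := by gcongr; exact norm_sum_le _ _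
    _ ≤ _ := sq_sum_le_card_mul_sum_sq

lemma star_dotProduct_self_eq_sum_norm_sq (v : n → ℂ) :
    star v ⬝ᵥ v = ((∑ i, ‖v i‖ ^ 2 : ℝ) : ℂ) := by
  push_cast
  exact Finset.sum_congr rfl fun i _ => conj_mul' (v i)

lemma star_dotProduct_mulVec_of_forall_eq {M : Matrix n n ℂ} {z : ℂ} (hM : ∀ j k, M j k = z)
    (v : n → ℂ) : star v ⬝ᵥ M *ᵥ v = z * ‖∑ i, v i‖ ^ 2 := by
  simp only [dotProduct, mulVec, hM, ← Finset.mul_sum, Pi.star_apply]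
  rw [← conj_mul', map_sum, ← Finset.sum_mul, mul_left_comm]
  rfl

lemma norm_star_dotProduct_mulVec_le {M : Matrix n n ℂ} {c : ℝ} (hM : ∀ j k, ‖M j k‖ ≤ c)
    (v : n → ℂ) : ‖star v ⬝ᵥ M *ᵥ v‖ ≤ c * Fintype.card n * ∑ i, ‖v i‖ ^ 2 := by
  rcases isEmpty_or_nonempty n with hn | ⟨⟨j⟩⟩
  · simp
  have hc : 0 ≤ c := (norm_nonneg _).trans (hM j j)
  calc ‖star v ⬝ᵥ M *ᵥ v‖ ≤ ∑ j, ∑ k, c * (‖v j‖ * ‖v k‖) := by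
        refine (norm_sum_le _ _).trans (Finset.sum_le_sum fun j _ => ?_)
        simp only [mulVec, dotProduct, Finset.mul_sum, Pi.star_apply]
        refine (norm_sum_le _ _).trans (Finset.sum_le_sum fun k _ => ?_)
        rw [norm_mul, norm_mul, norm_star, mul_left_comm]
        exact mul_le_mul_of_nonneg_right (hM j k) (by positivity)
    _ = c * (∑ i, ‖v i‖) ^ 2 := by
        rw [sq, Finset.sum_mul_sum, Finset.mul_sum]
        simp_rw [Finset.mul_sum]
    _ ≤ c * (Fintype.card n * ∑ i, ‖v i‖ ^ 2) := by gcongr; exact sq_sum_le_card_mul_sum_sq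
    _ = _ := by ring

namespace Matrix

omit [Fintype n] in
lemma IsSymm.isHermitian_map_ofReal_comp {A : Matrix n n ℂ} (hA : A.IsSymm) (f : ℂ → ℝ) :
    (A.map fun z => (f z : ℂ)).IsHermitian := by
  ext j k
  simp [hA.apply]

lemma IsSymm.eigenvalue_re_im_mul_sum_norm_sq {A : Matrix n n ℂ} (hA : A.IsSymm) {μ : ℂ}
    {v : n → ℂ} (hv : A *ᵥ v = μ • v) :
    μ.re * ∑ i, ‖v i‖ ^ 2 = (star v ⬝ᵥ A.map (fun z => (z.re : ℂ)) *ᵥ v).re ∧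
      μ.im * ∑ i, ‖v i‖ ^ 2 = (star v ⬝ᵥ A.map (fun z => (z.im : ℂ)) *ᵥ v).re := by
  have hsplit : A = A.map (fun z => (z.re : ℂ)) + I • A.map (fun z => (z.im : ℂ)) := by
    ext j k; simp [mul_comm I]
  set N := ∑ i, ‖v i‖ ^ 2
  have hq : star v ⬝ᵥ A *ᵥ v = μ * (N : ℂ) := by
    rw [hv, dotProduct_smul, star_dotProduct_self_eq_sum_norm_sq, smul_eq_mul]
  have hre := (hA.isHermitian_map_ofReal_comp re).im_star_dotProduct_mulVec_self v
  have him := (hA.isHermitian_map_ofReal_comp im).im_star_dotProduct_mulVec_self v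
  rw [hsplit, add_mulVec, smul_mulVec, dotProduct_add, dotProduct_smul] at hq
  simp only [RCLike.im_to_complex] at hre him
  constructor
  · simpa [hre, him] using (congrArg re hq).symm
  · simpa [hre, him] using (congrArg im hq).symm

end Matrix

lemma mem_uIcc_of_mul_eq_mul {x a s N m : ℝ} (hN : 0 < N) (hs₀ : 0 ≤ s) (hs : s ≤ m * N)
    (h : x * N = a * s) : x ∈ Set.uIcc (m * a) 0 := by
  have hx : x = s / N * a := by field_simp; linarith
  have ht : s / N ∈ Set.uIcc 0 m :=
    Set.Icc_subset_uIcc ⟨div_nonneg hs₀ hN.le, (div_le_iff₀ hN).2 hs⟩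
  rw [hx, Set.uIcc_comm]
  simpa [Set.image_mul_const_uIcc] using Set.mem_image_of_mem (· * a) ht

theorem bohemian_symmetric_strip_general_general
    (m : ℕ) (a b : ℝ) (A : Matrix (Fin m) (Fin m) ℂ)
    (hsym : A.transpose = A)
    (hent : ∀ j k : Fin m,
      A j k = (a : ℂ) + (b : ℂ) * Complex.I ∨ A j k = (a : ℂ) - (b : ℂ) * Complex.I)
    (lam : ℂ)
    (heig : Matrix.det (lam • (1 : Matrix (Fin m) (Fin m) ℂ) - A) = 0) :
    min ((m : ℝ) * a) 0 ≤ lam.re ∧ lam.re ≤ max ((m : ℝ) * a) 0 ∧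
      |lam.im| ≤ (m : ℝ) * |b| := by
  obtain ⟨v, hv0, hv⟩ := exists_mulVec_eq_zero_iff.2 heig
  rw [sub_mulVec, smul_mulVec, one_mulVec, sub_eq_zero, eq_comm] at hv
  obtain ⟨hre, him⟩ := IsSymm.eigenvalue_re_im_mul_sum_norm_sq hsym hv
  have hN : 0 < ∑ i, ‖v i‖ ^ 2 := by
    obtain ⟨j, hj⟩ := Function.ne_iff.1 hv0
    exact Finset.sum_pos' (fun i _ => by positivity) ⟨j, Finset.mem_univ j, pow_pos (norm_pos_iff.2 hj) 2⟩
  have hreA : ∀ j k, A.map (fun z => (z.re : ℂ)) j k = a := by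
    intro j k; rcases hent j k with h | h <;> simp [h]
  have himA : ∀ j k, ‖A.map (fun z => (z.im : ℂ)) j k‖ ≤ |b| := by
    intro j k; rcases hent j k with h | h <;> simp [h]
  have hsum := norm_sum_sq_le_card_mul_sum_norm_sq v
  have him_le := (abs_re_le_norm _).trans (norm_star_dotProduct_mulVec_le himA v)
  rw [star_dotProduct_mulVec_of_forall_eq hreA] at hre
  simp only [Fintype.card_fin] at hsum him_le
  norm_cast at hre
  have hre_mem := mem_uIcc_of_mul_eq_mul hN (by positivity) hsum hre
  refine ⟨hre_mem.1, hre_mem.2, ?_⟩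
  rw [← him, abs_mul, abs_of_pos hN] at him_le
  exact le_of_mul_le_mul_right (him_le.trans_eq (by ring)) hN

/-- Let `m ≥ 1`, let `a b : ℝ`, and let `A` be an `m × m` complex
matrix that is symmetric (`Aᵀ = A`) and all of whose entries belong to
`{a + b·i, a − b·i}`.  Then every eigenvalue `λ` of `A` satisfies
`min (m·a) 0 ≤ Re λ ≤ max (m·a) 0` and `|Im λ| ≤ m·|b|`. -/
theorem bohemian_symmetric_strip_general
    (m : ℕ) (hm : 1 ≤ m) (a b : ℝ) (A : Matrix (Fin m) (Fin m) ℂ)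
    (hsym : A.transpose = A)
    (hent : ∀ j k : Fin m,
      A j k = (a : ℂ) + (b : ℂ) * Complex.I ∨ A j k = (a : ℂ) - (b : ℂ) * Complex.I)
    (lam : ℂ)
    (heig : Matrix.det (lam • (1 : Matrix (Fin m) (Fin m) ℂ) - A) = 0) :
    min ((m : ℝ) * a) 0 ≤ lam.re ∧ lam.re ≤ max ((m : ℝ) * a) 0 ∧
      |lam.im| ≤ (m : ℝ) * |b| :=
  bohemian_symmetric_strip_general_general m a b A hsym hent lam heig
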